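/- arXiv:2304.01034 — 2 statements merged into one kernel-verified Lean document; each statement's English description precedes it below -/
import Mathlib

section
/- Let V be a finite-dimensional real vector space, α an inner product on V, X ∈ V, and φ a smooth positive function on an open interval containing [−√(α(X,X)), √(α(X,X))]. Define F(y) := √(α(y,y))·φ(α(X,y)/√(α(y,y))) for y ≠ 0. Then for every y ∈ V∖{0} and all u,v ∈ V, setting r := α(X,y)/α(y,y)^{1/2}, one has (1/2)·∂²/(∂s∂t)|_{s=t=0} F²(y+su+tv) = φ(r)²·α(u,v) − φ(r)φ'(r)·α(y,u)·α(y,v)·α(X,y)/α(y,y)^{3/2} + φ(r)φ'(r)·(α(y,v)·α(X,u) + α(y,u)·α(X,v) − α(u,v)·α(X,y))/α(y,y)^{1/2} + (φ'(r)² + φ(r)·φ''(r))·(α(X,u) − α(y,u)·α(X,y)/α(y,y))·(α(X,v) − α(y,v)·α(X,y)/α(y,y)). -/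
/-!
Along a line `t ↦ w + t • p` the square `F² = α(w,w) · φ(β/α)²` is built from a quadratic
polynomial, a square root, a quotient and `φ`, so the chain rule gives `d/dt F²(w + t p)` at
`t = 0` in closed form whenever `α(w,w) > 0`. For `w = y + s u` this holds for all `s` near `0`,
so the mixed second derivative is the `s`-derivative of that closed form, again a chain-rule
computation. Cauchy–Schwarz keeps `β/α` in `[-√α(X,X), √α(X,X)]`, where `φ` is smooth.
-/

noncomputable section

/-- The fundamental tensor `g_y(u,v) = (1/2)·∂²/∂s∂t|_{s=t=0} F(y+su+tv)²`. -/
def gTensor {V : Type*} [NormedAddCommGroup V] [NormedSpace ℝ V]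
    (F : V → ℝ) (y u v : V) : ℝ :=
  (1 / 2) * deriv (fun s : ℝ => deriv (fun t : ℝ => (F (y + s • u + t • v)) ^ 2) 0) 0

/-- The Cartan tensor `C_y(u,v,w) = (1/2)·d/dt|_{t=0} g_{y+tw}(u,v)`. -/
def cartanTensor {V : Type*} [NormedAddCommGroup V] [NormedSpace ℝ V]
    (F : V → ℝ) (y u v w : V) : ℝ :=
  (1 / 2) * deriv (fun t : ℝ => gTensor F (y + t • w) u v) 0

/-- `F` is a Minkowski norm: positive and smooth away from `0`, positively
homogeneous of degree one, with positive-definite symmetric bilinear fundamental tensor. -/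
structure IsMinkowskiNorm {V : Type*} [NormedAddCommGroup V] [NormedSpace ℝ V]
    (F : V → ℝ) : Prop where
  pos : ∀ y : V, y ≠ 0 → 0 < F y
  smooth : ContDiffOn ℝ (⊤ : ℕ∞) F {(0 : V)}ᶜ
  homog : ∀ c : ℝ, 0 < c → ∀ y : V, F (c • y) = c * F y
  g_symm : ∀ y : V, y ≠ 0 → ∀ u v : V, gTensor F y u v = gTensor F y v u
  g_add_left : ∀ y : V, y ≠ 0 → ∀ u u' v : V,
    gTensor F y (u + u') v = gTensor F y u v + gTensor F y u' v
  g_smul_left : ∀ y : V, y ≠ 0 → ∀ (c : ℝ) (u v : V),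
    gTensor F y (c • u) v = c * gTensor F y u v
  g_posdef : ∀ y : V, y ≠ 0 → ∀ u : V, u ≠ 0 → 0 < gTensor F y u u

/-- A Lie algebra structure on the real vector space `V`, given as a bilinear map. -/
structure IsLieBracket {V : Type*} [AddCommGroup V] [Module ℝ V]
    (L : V →ₗ[ℝ] V →ₗ[ℝ] V) : Prop where
  alternate : ∀ x : V, L x x = 0
  jacobi : ∀ x y z : V, L x (L y z) = L (L x y) z + L y (L x z)

/-- The cyclic condition for a Minkowski norm on a Lie algebra. -/
def IsCyclicNorm {V : Type*} [NormedAddCommGroup V] [NormedSpace ℝ V]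
    (L : V →ₗ[ℝ] V →ₗ[ℝ] V) (F : V → ℝ) : Prop :=
  ∀ y : V, y ≠ 0 → ∀ x z : V,
    gTensor F y (L x y) z + gTensor F y (L y z) x + gTensor F y (L z x) y = 0

/-- The Riemann curvature `R_y(u) = D_η N(y,u) − N(y,N(y,u)) + N(y,[y,u]) − [y,N(y,u)]`. -/
def RiemannCurv {V : Type*} [NormedAddCommGroup V] [NormedSpace ℝ V]
    (L : V →ₗ[ℝ] V →ₗ[ℝ] V) (η : V → V) (N : V → V → V) (y u : V) : V :=
  fderiv ℝ (fun z => N z u) y (η y) - N y (N y u) + N y (L y u) - L y (N y u)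

/-- Projection onto `m` along `h` in the decomposition `g = h ⊕ m`. -/
def projTo {V : Type*} [AddCommGroup V] [Module ℝ V] (h m : Submodule ℝ V)
    (hcompl : IsCompl h m) : V →ₗ[ℝ] m :=
  m.linearProjOfIsCompl h hcompl.symm

/-- The inner product making the basis `e` orthonormal. -/
def basisInner {V : Type*} [AddCommGroup V] [Module ℝ V] {ι : Type*} [Fintype ι]
    (e : Module.Basis ι ℝ V) (x y : V) : ℝ :=
  ∑ k, e.repr x k * e.repr y k

open Topology

section Line

variable {V : Type*} [AddCommGroup V] [Module ℝ V]

lemma hasDerivAt_linearMap_line (ℓ : V →ₗ[ℝ] ℝ) (w p : V) :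
    HasDerivAt (fun t : ℝ => ℓ (w + t • p)) (ℓ p) 0 := by
  simp only [map_add, map_smul, smul_eq_mul]
  simpa using ((hasDerivAt_id (0 : ℝ)).mul_const (ℓ p)).const_add (ℓ w)

variable (α : V →ₗ[ℝ] V →ₗ[ℝ] ℝ) (X : V)

def alphaBetaNormSq (φ : ℝ → ℝ) (w : V) : ℝ :=
  α w w * φ (α X w / √(α w w)) ^ 2

def alphaBetaNormSqDeriv (φ φ' : ℝ → ℝ) (w p : V) : ℝ :=
  2 * α w p * φ (α X w / √(α w w)) ^ 2
    + 2 * φ (α X w / √(α w w)) * φ' (α X w / √(α w w))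
      * (√(α w w) * α X p - α w p * α X w / √(α w w))

variable (hα : ∀ u v, α u v = α v u)
include hα

lemma hasDerivAt_apply_self_line (w p : V) :
    HasDerivAt (fun t : ℝ => α (w + t • p) (w + t • p)) (2 * α w p) 0 := by
  have hpoly : (fun t : ℝ => α (w + t • p) (w + t • p))
      = fun t => α w w + t * (2 * α w p) + t ^ 2 * α p p := by
    funext t
    simp only [map_add, map_smul, LinearMap.add_apply, LinearMap.smul_apply, smul_eq_mul, hα p w]
    ring
  rw [hpoly]
  simpa using (((hasDerivAt_id (0 : ℝ)).mul_const (2 * α w p)).const_add (α w w)).fun_add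
    ((hasDerivAt_pow 2 (0 : ℝ)).mul_const (α p p))

lemma hasDerivAt_sqrt_apply_self_line {w : V} (hw : 0 < α w w) (p : V) :
    HasDerivAt (fun t : ℝ => √(α (w + t • p) (w + t • p))) (α w p / √(α w w)) 0 := by
  convert (hasDerivAt_apply_self_line α hα w p).sqrt (by simpa using hw.ne') using 1
  simp only [zero_smul, add_zero]
  ring

lemma hasDerivAt_div_sqrt_line {w : V} (hw : 0 < α w w) (p : V) :
    HasDerivAt (fun t : ℝ => α X (w + t • p) / √(α (w + t • p) (w + t • p)))
      ((α X p - α w p * α X w / α w w) / √(α w w)) 0 := by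
  refine ((hasDerivAt_linearMap_line (α X) w p).fun_div (hasDerivAt_sqrt_apply_self_line α hα hw p)
    (by simpa using (Real.sqrt_pos.mpr hw).ne')).congr_deriv ?_
  simp only [zero_smul, add_zero]
  field_simp
  rw [Real.sq_sqrt hw.le]
  ring

lemma HasDerivAt.comp_div_sqrt_line {w : V} (hw : 0 < α w w) (p : V) {ψ : ℝ → ℝ} {d : ℝ}
    (hψ : HasDerivAt ψ d (α X w / √(α w w))) :
    HasDerivAt (fun t : ℝ => ψ (α X (w + t • p) / √(α (w + t • p) (w + t • p))))
      (d * ((α X p - α w p * α X w / α w w) / √(α w w))) 0 :=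
  HasDerivAt.comp_of_eq 0 hψ (hasDerivAt_div_sqrt_line α X hα hw p) (by simp)

lemma div_sqrt_mem_Icc (hnn : ∀ v, 0 ≤ α v v) (w : V) :
    α X w / √(α w w) ∈ Set.Icc (-√(α X X)) √(α X X) := by
  have hcs : |α X w| ≤ √(α X X) * √(α w w) := by
    rw [← Real.sqrt_mul (hnn X)]
    exact Real.abs_le_sqrt (LinearMap.BilinForm.apply_sq_le_of_symm α hnn ⟨fun u v => hα u v⟩ X w)
  rw [Set.mem_Icc, ← abs_le, abs_div, abs_of_nonneg (Real.sqrt_nonneg _)]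
  exact div_le_of_le_mul₀ (Real.sqrt_nonneg _) (Real.sqrt_nonneg _) hcs

lemma hasDerivAt_alphaBetaNormSq_line {w : V} (hw : 0 < α w w) (p : V) {φ φ' : ℝ → ℝ}
    (hφ : HasDerivAt φ (φ' (α X w / √(α w w))) (α X w / √(α w w))) :
    HasDerivAt (fun t : ℝ => alphaBetaNormSq α X φ (w + t • p))
      (alphaBetaNormSqDeriv α X φ φ' w p) 0 := by
  refine ((hasDerivAt_apply_self_line α hα w p).fun_mul
    ((hφ.comp_div_sqrt_line α X hα hw p).fun_pow 2)).congr_deriv ?_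
  simp only [alphaBetaNormSqDeriv, zero_smul, add_zero]
  field_simp
  rw [Real.sq_sqrt hw.le]
  ring

lemma hasDerivAt_alphaBetaNormSqDeriv_line {y : V} (hy : 0 < α y y) (u v : V)
    {φ φ' : ℝ → ℝ} {φ'' : ℝ}
    (hφ : HasDerivAt φ (φ' (α X y / √(α y y))) (α X y / √(α y y)))
    (hφ' : HasDerivAt φ' φ'' (α X y / √(α y y))) :
    HasDerivAt (fun s : ℝ => alphaBetaNormSqDeriv α X φ φ' (y + s • u) v)
      (2 * ((φ (α X y / √(α y y))) ^ 2 * α u v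
          - φ (α X y / √(α y y)) * φ' (α X y / √(α y y))
              * (α y u * α y v * α X y) / √(α y y) ^ 3
          + φ (α X y / √(α y y)) * φ' (α X y / √(α y y))
              * (α y v * α X u + α y u * α X v - α u v * α X y) / √(α y y)
          + ((φ' (α X y / √(α y y))) ^ 2 + φ (α X y / √(α y y)) * φ'')
              * (α X u - α y u * α X y / α y y)
              * (α X v - α y v * α X y / α y y))) 0 := by
  have hq0 : √(α y y) ≠ 0 := (Real.sqrt_pos.mpr hy).ne'
  have hsqrt := hasDerivAt_sqrt_apply_self_line α hα hy u
  have hqne : √(α (y + (0 : ℝ) • u) (y + (0 : ℝ) • u)) ≠ 0 := by simpa using hq0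
  have hβ := hasDerivAt_linearMap_line (α X) y u
  have hαv : HasDerivAt (fun s : ℝ => α (y + s • u) v) (α u v) 0 := by
    simpa using hasDerivAt_linearMap_line (α.flip v) y u
  have hφρ := hφ.comp_div_sqrt_line α X hα hy u
  have hφ'ρ := hφ'.comp_div_sqrt_line α X hα hy u
  refine (((hαv.const_mul 2).fun_mul (hφρ.fun_pow 2)).fun_add
    (((hφρ.const_mul 2).fun_mul hφ'ρ).fun_mul
      ((hsqrt.mul_const (α X v)).fun_sub ((hαv.fun_mul hβ).fun_div hsqrt hqne)))).congr_deriv ?_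
  simp only [zero_smul, add_zero]
  have hq2 : √(α y y) ^ 2 = α y y := Real.sq_sqrt hy.le
  -- with `α y y` written as `q ^ 2`, `field_simp` clears every square root
  set q := √(α y y)
  rw [← hq2]
  field_simp
  ring

end Line

theorem fundamental_tensor_of_alpha_beta_norm_general
    {V : Type*} [NormedAddCommGroup V] [NormedSpace ℝ V]
    (α : V →ₗ[ℝ] V →ₗ[ℝ] ℝ)
    (hαsymm : ∀ u v : V, α u v = α v u)
    (hαpos : ∀ v : V, v ≠ 0 → 0 < α v v)
    (X : V) (φ : ℝ → ℝ) (lo hi : ℝ)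
    (hIcc : Set.Icc (-Real.sqrt (α X X)) (Real.sqrt (α X X)) ⊆ Set.Ioo lo hi)
    (hφ : ContDiffOn ℝ (⊤ : ℕ∞) φ (Set.Ioo lo hi))
    (F : V → ℝ)
    (hFdef : ∀ y : V, F y = Real.sqrt (α y y) * φ (α X y / Real.sqrt (α y y))) :
    ∀ y : V, y ≠ 0 → ∀ u v : V,
      gTensor F y u v =
        (φ (α X y / Real.sqrt (α y y))) ^ 2 * α u v
          - φ (α X y / Real.sqrt (α y y)) * deriv φ (α X y / Real.sqrt (α y y))
              * (α y u * α y v * α X y) / Real.sqrt (α y y) ^ 3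
          + φ (α X y / Real.sqrt (α y y)) * deriv φ (α X y / Real.sqrt (α y y))
              * (α y v * α X u + α y u * α X v - α u v * α X y) / Real.sqrt (α y y)
          + ((deriv φ (α X y / Real.sqrt (α y y))) ^ 2
                + φ (α X y / Real.sqrt (α y y))
                    * deriv (deriv φ) (α X y / Real.sqrt (α y y)))
              * (α X u - α y u * α X y / α y y)
              * (α X v - α y v * α X y / α y y) := by
  intro y hy u v
  have hnn (w : V) : 0 ≤ α w w := by
    rcases eq_or_ne w 0 with rfl | hw
    · simp
    · exact (hαpos w hw).le
  have hFsq (w : V) : F w ^ 2 = alphaBetaNormSq α X φ w := by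
    rw [hFdef, alphaBetaNormSq, mul_pow, Real.sq_sqrt (hnn w)]
  have hρ (w : V) : α X w / √(α w w) ∈ Set.Ioo lo hi :=
    hIcc (div_sqrt_mem_Icc α X hαsymm hnn w)
  have hφ₁ (w : V) : HasDerivAt φ (deriv φ (α X w / √(α w w))) (α X w / √(α w w)) :=
    ((hφ.contDiffAt (isOpen_Ioo.mem_nhds (hρ w))).differentiableAt (by simp)).hasDerivAt
  have hφ' : ContDiffOn ℝ 1 (deriv φ) (Set.Ioo lo hi) :=
    hφ.deriv_of_isOpen isOpen_Ioo (WithTop.coe_le_coe.mpr le_top)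
  have hφ₂ : HasDerivAt (deriv φ) (deriv (deriv φ) (α X y / √(α y y))) (α X y / √(α y y)) :=
    ((hφ'.contDiffAt (isOpen_Ioo.mem_nhds (hρ y))).differentiableAt one_ne_zero).hasDerivAt
  have hpos : ∀ᶠ s in 𝓝 (0 : ℝ), 0 < α (y + s • u) (y + s • u) :=
    (hasDerivAt_apply_self_line α hαsymm y u).continuousAt.eventually_const_lt
      (by simpa using hαpos y hy)
  have hfirst : (fun s : ℝ => deriv (fun t : ℝ => F (y + s • u + t • v) ^ 2) 0)
      =ᶠ[𝓝 0] fun s => alphaBetaNormSqDeriv α X φ (deriv φ) (y + s • u) v := by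
    filter_upwards [hpos] with s hs
    simp only [hFsq]
    exact (hasDerivAt_alphaBetaNormSq_line α X hαsymm hs v (hφ₁ _)).deriv
  rw [gTensor, hfirst.deriv_eq,
    (hasDerivAt_alphaBetaNormSqDeriv_line α X hαsymm (hαpos y hy) u v (hφ₁ y) hφ₂).deriv]
  ring

/-- The fundamental tensor of the `(α,β)`-type norm
`F(y) = √(α(y,y))·φ(α(X,y)/√(α(y,y)))`. -/
theorem fundamental_tensor_of_alpha_beta_norm
    {V : Type*} [NormedAddCommGroup V] [NormedSpace ℝ V] [FiniteDimensional ℝ V]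
    (α : V →ₗ[ℝ] V →ₗ[ℝ] ℝ)
    (hαsymm : ∀ u v : V, α u v = α v u)
    (hαpos : ∀ v : V, v ≠ 0 → 0 < α v v)
    (X : V) (φ : ℝ → ℝ) (lo hi : ℝ)
    (hIcc : Set.Icc (-Real.sqrt (α X X)) (Real.sqrt (α X X)) ⊆ Set.Ioo lo hi)
    (hφ : ContDiffOn ℝ (⊤ : ℕ∞) φ (Set.Ioo lo hi))
    (hφpos : ∀ r ∈ Set.Ioo lo hi, 0 < φ r)
    (F : V → ℝ)
    (hFdef : ∀ y : V, F y = Real.sqrt (α y y) * φ (α X y / Real.sqrt (α y y))) :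
    ∀ y : V, y ≠ 0 → ∀ u v : V,
      gTensor F y u v =
        (φ (α X y / Real.sqrt (α y y))) ^ 2 * α u v
          - φ (α X y / Real.sqrt (α y y)) * deriv φ (α X y / Real.sqrt (α y y))
              * (α y u * α y v * α X y) / Real.sqrt (α y y) ^ 3
          + φ (α X y / Real.sqrt (α y y)) * deriv φ (α X y / Real.sqrt (α y y))
              * (α y v * α X u + α y u * α X v - α u v * α X y) / Real.sqrt (α y y)
          + ((deriv φ (α X y / Real.sqrt (α y y))) ^ 2
                + φ (α X y / Real.sqrt (α y y))
                    * deriv (deriv φ) (α X y / Real.sqrt (α y y)))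
              * (α X u - α y u * α X y / α y y)
              * (α X v - α y v * α X y / α y y) :=
  fundamental_tensor_of_alpha_beta_norm_general α hαsymm hαpos X φ lo hi hIcc hφ F hFdef

end
end

section
/- Let F be a cyclic Minkowski norm on a finite-dimensional real Lie algebra g with spray vector field η and connection operator N, and let y ∈ g∖{0} satisfy g_y([u,v],y) = 0 for all u,v ∈ g. Then η(y) = 0 and N(y,v) = [v,y] for every v ∈ g. -/
noncomputable section

/- The hypothesis gives `g_y(η(y),u) = g_y([u,y],y) = 0` for all `u`. At `η(y) = 0` the
Cartan term drops out of the defining identity of `N(y,v)`, and the cyclic condition together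
with `g_y([g,g],y) = 0` turns the remaining right-hand side `g_y([u,y],v) + g_y([v,y],u)` into
`2 g_y([v,y],u)`. Both vectors are then pinned down by the nondegeneracy of `g_y`. -/

theorem cartanTensor_zero_right {V : Type*} [NormedAddCommGroup V] [NormedSpace ℝ V]
    (F : V → ℝ) (y u v : V) : cartanTensor F y u v 0 = 0 := by
  simp [cartanTensor]

namespace IsMinkowskiNorm

variable {V : Type*} [NormedAddCommGroup V] [NormedSpace ℝ V] {F : V → ℝ} {y : V}

def gTensorLeft (hF : IsMinkowskiNorm F) (hy : y ≠ 0) (u : V) : V →ₗ[ℝ] ℝ where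
  toFun w := gTensor F y w u
  map_add' w w' := hF.g_add_left y hy w w' u
  map_smul' c w := hF.g_smul_left y hy c w u

theorem eq_of_gTensor_eq (hF : IsMinkowskiNorm F) (hy : y ≠ 0) {w w' : V}
    (h : ∀ u, gTensor F y w u = gTensor F y w' u) : w = w' := by
  by_contra hne
  have hpos := hF.g_posdef y hy (w - w') (sub_ne_zero.mpr hne)
  have hzero : gTensor F y (w - w') (w - w') = 0 := by
    change hF.gTensorLeft hy (w - w') (w - w') = 0
    rw [map_sub, sub_eq_zero]
    exact h (w - w')
  exact hpos.ne' hzero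

theorem eq_zero_of_gTensor_eq_zero (hF : IsMinkowskiNorm F) (hy : y ≠ 0) {w : V}
    (h : ∀ u, gTensor F y w u = 0) : w = 0 :=
  hF.eq_of_gTensor_eq hy fun u => (h u).trans (map_zero (hF.gTensorLeft hy u)).symm

end IsMinkowskiNorm

section SprayConnection

variable {V : Type*} [NormedAddCommGroup V] [NormedSpace ℝ V]
  {L : V →ₗ[ℝ] V →ₗ[ℝ] V} {F : V → ℝ} {η : V → V} {N : V → V → V} {y : V}

theorem spray_eq_zero (hF : IsMinkowskiNorm F)
    (hη : ∀ y : V, y ≠ 0 → ∀ u : V, gTensor F y (η y) u = gTensor F y y (L u y))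
    (hy : y ≠ 0) (h0 : ∀ u : V, gTensor F y (L u y) y = 0) : η y = 0 :=
  hF.eq_zero_of_gTensor_eq_zero hy fun u => by
    rw [hη y hy u, hF.g_symm y hy, h0]

theorem gTensor_bracket_left_comm (hL : IsLieBracket L) (hF : IsMinkowskiNorm F)
    (hcyc : IsCyclicNorm L F) (hy : y ≠ 0) (h0 : ∀ u v : V, gTensor F y (L u v) y = 0)
    (u v : V) : gTensor F y (L u y) v = gTensor F y (L v y) u := by
  have hcyc_uv := hcyc y hy u v
  have hswap : gTensor F y (L y v) u = -gTensor F y (L v y) u := by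
    rw [← LinearMap.IsAlt.neg hL.alternate v y]
    exact map_neg (hF.gTensorLeft hy u) (L v y)
  rw [h0, hswap] at hcyc_uv
  linarith

theorem connection_eq_bracket (hL : IsLieBracket L) (hF : IsMinkowskiNorm F)
    (hcyc : IsCyclicNorm L F)
    (hN : ∀ y : V, y ≠ 0 → ∀ u v : V,
      2 * gTensor F y (N y v) u =
        gTensor F y (L u v) y + gTensor F y (L u y) v + gTensor F y (L v y) u
          - 2 * cartanTensor F y u v (η y))
    (hy : y ≠ 0) (h0 : ∀ u v : V, gTensor F y (L u v) y = 0) (hη0 : η y = 0) (v : V) :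
    N y v = L v y :=
  hF.eq_of_gTensor_eq hy fun u => by
    have hNuv := hN y hy u v
    rw [hη0, cartanTensor_zero_right, h0,
      gTensor_bracket_left_comm hL hF hcyc hy h0] at hNuv
    linarith

end SprayConnection

theorem cyclic_spray_and_connection_general
    {g : Type*} [NormedAddCommGroup g] [NormedSpace ℝ g]
    (L : g →ₗ[ℝ] g →ₗ[ℝ] g) (hL : IsLieBracket L)
    (F : g → ℝ) (hF : IsMinkowskiNorm F) (hcyc : IsCyclicNorm L F)
    (η : g → g) (N : g → g → g)
    (hη : ∀ y : g, y ≠ 0 → ∀ u : g, gTensor F y (η y) u = gTensor F y y (L u y))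
    (hN : ∀ y : g, y ≠ 0 → ∀ u v : g,
      2 * gTensor F y (N y v) u =
        gTensor F y (L u v) y + gTensor F y (L u y) v + gTensor F y (L v y) u
          - 2 * cartanTensor F y u v (η y))
    (y : g) (hy : y ≠ 0)
    (h0 : ∀ u v : g, gTensor F y (L u v) y = 0) :
    η y = 0 ∧ ∀ v : g, N y v = L v y := by
  have hη0 : η y = 0 := spray_eq_zero hF hη hy fun u => h0 u y
  exact ⟨hη0, connection_eq_bracket hL hF hcyc hN hy h0 hη0⟩

/-- For a cyclic Minkowski norm, if `g_y([g,g],y) = 0` then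
`η(y) = 0` and `N(y,v) = [v,y]` for all `v`. -/
theorem cyclic_spray_and_connection
    {g : Type*} [NormedAddCommGroup g] [NormedSpace ℝ g] [FiniteDimensional ℝ g]
    (L : g →ₗ[ℝ] g →ₗ[ℝ] g) (hL : IsLieBracket L)
    (F : g → ℝ) (hF : IsMinkowskiNorm F) (hcyc : IsCyclicNorm L F)
    (η : g → g) (N : g → g → g)
    (hη : ∀ y : g, y ≠ 0 → ∀ u : g, gTensor F y (η y) u = gTensor F y y (L u y))
    (hN : ∀ y : g, y ≠ 0 → ∀ u v : g,
      2 * gTensor F y (N y v) u =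
        gTensor F y (L u v) y + gTensor F y (L u y) v + gTensor F y (L v y) u
          - 2 * cartanTensor F y u v (η y))
    (y : g) (hy : y ≠ 0)
    (h0 : ∀ u v : g, gTensor F y (L u v) y = 0) :
    η y = 0 ∧ ∀ v : g, N y v = L v y :=
  cyclic_spray_and_connection_general L hL F hF hcyc η N hη hN y hy h0

end
end
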